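/- arXiv:1705.07965 — 4 statements merged into one kernel-verified Lean document; each statement's English description precedes it below -/
import Mathlib

section
/- Let M be a compact smooth manifold without boundary, X a smooth vector field on M with flow φ_t, U a C¹ vector field on M, and r : M → ℝ a continuous function such that dφ_t(z)·U(z) = exp(∫_0^t r(φ_s(z)) ds)·U(φ_t(z)) for all t ∈ ℝ, z ∈ M. Then the Lie bracket satisfies [X,U] = −r·U; equivalently, for every f ∈ C^∞(M) and z ∈ M, the map t ↦ (Uf)(φ_t(z)) is differentiable at t = 0 and its derivative equals (U(Xf))(z) − r(z)·(Uf)(z), where Uf := df(U) and Xf := df(X). -/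
/-! Put `g t := d(f ∘ φ_t)(z)(U z)`. By the chain rule and the hypothesis on `dφ_t`,
`g t = exp(∫₀ᵗ r(φ_s z) ds) · (Uf)(φ_t z)`, so it suffices to know `g'(0) = U(Xf)(z)`.
In a chart at `z` put `G(t, x) = f(φ_t(x))`: then `g t` is the `x`-derivative of `G(t, ·)` in
the direction `U z`, while `Xf` is the `t`-derivative of `G` at `t = 0`. Since `G` is `C²`, the
mixed second derivatives of `G` agree, which is `g'(0) = U(Xf)(z)`. -/

open Filter
open scoped Manifold Topology

section SecondDerivative

variable {𝕜 : Type*} [NontriviallyNormedField 𝕜] {E F : Type*} [NormedAddCommGroup E]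
  [NormedSpace 𝕜 E] [NormedAddCommGroup F] [NormedSpace 𝕜 F] {f : E → F} {x : E}
  {n : WithTop ℕ∞}

theorem ContDiffAt.eventually_differentiableAt (hf : ContDiffAt 𝕜 n f x) (hn : 1 ≤ n) :
    ∀ᶠ y in 𝓝 x, DifferentiableAt 𝕜 f y :=
  ((hf.of_le hn).eventually (by simp)).mono fun _ hy => hy.differentiableAt one_ne_zero

theorem ContDiffAt.hasFDerivAt_fderiv (hf : ContDiffAt 𝕜 n f x) (hn : 2 ≤ n) :
    HasFDerivAt (fderiv 𝕜 f) (fderiv 𝕜 (fderiv 𝕜 f) x) x :=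
  ((hf.fderiv_right (m := 1) hn).differentiableAt one_ne_zero).hasFDerivAt

end SecondDerivative

section MixedPartials

variable {𝕜 : Type*} [RCLike 𝕜] {E F : Type*} [NormedAddCommGroup E] [NormedSpace 𝕜 E]
  [NormedAddCommGroup F] [NormedSpace 𝕜 F] {G : 𝕜 × E → F} {t₀ : 𝕜} {x₀ : E}

theorem DifferentiableAt.hasDerivAt_comp_prodMk_left {t : 𝕜} {x : E}
    (h : DifferentiableAt 𝕜 G (t, x)) :
    HasDerivAt (fun s => G (s, x)) (fderiv 𝕜 G (t, x) (1, 0)) t :=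
  (h.hasFDerivAt.comp t (hasFDerivAt_prodMk_left t x)).hasDerivAt.congr_deriv rfl

theorem DifferentiableAt.hasFDerivAt_comp_prodMk_right {t : 𝕜} {x : E}
    (h : DifferentiableAt 𝕜 G (t, x)) :
    HasFDerivAt (fun y => G (t, y)) ((fderiv 𝕜 G (t, x)).comp (.inr 𝕜 𝕜 E)) x :=
  h.hasFDerivAt.comp x (hasFDerivAt_prodMk_right t x)

theorem ContDiffAt.hasFDerivAt_deriv_slice (hG : ContDiffAt 𝕜 2 G (t₀, x₀)) :
    HasFDerivAt (fun x => deriv (fun t => G (t, x)) t₀)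
      ((ContinuousLinearMap.apply 𝕜 F ((1 : 𝕜), (0 : E))).comp
        ((fderiv 𝕜 (fderiv 𝕜 G) (t₀, x₀)).comp (.inr 𝕜 𝕜 E))) x₀ := by
  have hslice : ∀ᶠ x in 𝓝 x₀, DifferentiableAt 𝕜 G (t₀, x) :=
    (continuous_const.prodMk continuous_id).continuousAt.eventually
      (hG.eventually_differentiableAt (by norm_num))
  refine HasFDerivAt.congr_of_eventuallyEq ?_
    (hslice.mono fun x hx => hx.hasDerivAt_comp_prodMk_left.deriv)
  exact (ContinuousLinearMap.apply 𝕜 F _).hasFDerivAt.comp x₀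
    ((hG.hasFDerivAt_fderiv (by norm_num)).comp x₀ (hasFDerivAt_prodMk_right t₀ x₀))

theorem ContDiffAt.hasDerivAt_fderiv_slice_apply (hG : ContDiffAt 𝕜 2 G (t₀, x₀)) (v : E) :
    HasDerivAt (fun t => fderiv 𝕜 (fun x => G (t, x)) x₀ v)
      (fderiv 𝕜 (fun x => deriv (fun t => G (t, x)) t₀) x₀ v) t₀ := by
  have hslice : ∀ᶠ t in 𝓝 t₀, DifferentiableAt 𝕜 G (t, x₀) :=
    (continuous_id.prodMk continuous_const).continuousAt.eventually
      (hG.eventually_differentiableAt (by norm_num))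
  rw [hG.hasFDerivAt_deriv_slice.fderiv]
  have hsymm := hG.isSymmSndFDerivAt (n := 2) (by simp) (1, 0) (0, v)
  simp only [ContinuousLinearMap.coe_comp, Function.comp_apply, ContinuousLinearMap.inr_apply,
    ContinuousLinearMap.apply_apply, ← hsymm]
  refine HasDerivAt.congr_of_eventuallyEq ?_
    (hslice.mono fun t ht => congrArg (· v) ht.hasFDerivAt_comp_prodMk_right.fderiv)
  exact ((ContinuousLinearMap.apply 𝕜 F ((0 : 𝕜), v)).hasFDerivAt.comp t₀
    ((hG.hasFDerivAt_fderiv (by norm_num)).comp t₀ (hasFDerivAt_prodMk_left t₀ x₀))).hasDerivAt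

end MixedPartials

section Charts

variable {𝕜 : Type*} [NontriviallyNormedField 𝕜] {E F : Type*} [NormedAddCommGroup E]
  [NormedSpace 𝕜 E] [NormedAddCommGroup F] [NormedSpace 𝕜 F] {H : Type*} [TopologicalSpace H]
  {I : ModelWithCorners 𝕜 E H} [I.Boundaryless] {M : Type*} [TopologicalSpace M]
  [ChartedSpace H M] {f : M → F} {z : M} {n : WithTop ℕ∞}

theorem MDifferentiableAt.mfderiv_eq_fderiv_comp_extChartAt_symm
    (hf : MDifferentiableAt I 𝓘(𝕜, F) f z) :
    mfderiv I 𝓘(𝕜, F) f z = fderiv 𝕜 (f ∘ (extChartAt I z).symm) (extChartAt I z z) := by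
  rw [hf.mfderiv, I.range_eq_univ, fderivWithin_univ]
  rfl

theorem DifferentiableAt.mdifferentiableAt_of_comp_extChartAt_symm [IsManifold I 1 M]
    (hf : DifferentiableAt 𝕜 (f ∘ (extChartAt I z).symm) (extChartAt I z z)) :
    MDifferentiableAt I 𝓘(𝕜, F) f z := by
  rw [mdifferentiableAt_iff_source_of_mem_source (mem_chart_source H z), I.range_eq_univ,
    mdifferentiableWithinAt_univ]
  exact hf.mdifferentiableAt

theorem ContMDiff.contDiffAt_comp_prodMap_extChartAt_symm [IsManifold I n M] {E' : Type*}
    [NormedAddCommGroup E'] [NormedSpace 𝕜 E'] {Φ : E' × M → F}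
    (hΦ : ContMDiff (𝓘(𝕜, E').prod I) 𝓘(𝕜, F) n Φ) (t : E') (z : M) :
    ContDiffAt 𝕜 n (fun p : E' × E => Φ (p.1, (extChartAt I z).symm p.2))
      (t, extChartAt I z z) := by
  have hsymm : ContMDiffAt 𝓘(𝕜, E) I n (extChartAt I z).symm (extChartAt I z z) :=
    (contMDiffOn_extChartAt_symm z).contMDiffAt (extChartAt_target_mem_nhds z)
  have h := (hΦ _).comp (t, extChartAt I z z)
    (contMDiffAt_fst.prodMk (hsymm.comp (t, extChartAt I z z) contMDiffAt_snd))
  have h' : ContMDiffAt 𝓘(𝕜, E' × E) 𝓘(𝕜, F) n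
      (fun p : E' × E => Φ (p.1, (extChartAt I z).symm p.2)) (t, extChartAt I z z) := by
    rw [modelWithCornersSelf_prod, ← chartedSpaceSelf_prod]
    exact h
  exact h'.contDiffAt

end Charts

theorem IsMIntegralCurve.hasDerivAt_comp {E F : Type*} [NormedAddCommGroup E]
    [NormedSpace ℝ E] [NormedAddCommGroup F] [NormedSpace ℝ F] {H : Type*} [TopologicalSpace H]
    {I : ModelWithCorners ℝ E H} {M : Type*} [TopologicalSpace M] [ChartedSpace H M]
    {γ : ℝ → M} {v : (x : M) → TangentSpace I x} (hγ : IsMIntegralCurve γ v) {f : M → F} {t : ℝ}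
    (hf : MDifferentiableAt I 𝓘(ℝ, F) f (γ t)) :
    -- `show F from` reads the value, an element of `TangentSpace 𝓘(ℝ, F) _`, as an element of `F`
    HasDerivAt (f ∘ γ) (show F from mfderiv I 𝓘(ℝ, F) f (γ t) (v (γ t))) t := by
  rw [hasDerivAt_iff_hasFDerivAt]
  refine (hf.hasMFDerivAt.comp t (hγ t)).hasFDerivAt.congr_fderiv ?_
  ext
  exact (mfderiv I 𝓘(ℝ, F) f (γ t)).map_smul (1 : ℝ) (v (γ t))

theorem hasDerivAt_of_eq_exp_mul {a g h : ℝ → ℝ} {t ρ g' : ℝ} (ha : HasDerivAt a ρ t)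
    (hg : HasDerivAt g g' t) (hgh : ∀ s, g s = Real.exp (a s) * h s) :
    HasDerivAt h (Real.exp (-a t) * (g' - ρ * g t)) t := by
  have hh : h = fun s => Real.exp (-a s) * g s := by
    funext s
    rw [hgh, ← mul_assoc, ← Real.exp_add, neg_add_cancel, Real.exp_zero, one_mul]
  have hd := ha.neg.exp.mul hg
  rw [hh]
  refine hd.congr_deriv ?_
  simp only [hgh, Pi.neg_apply]
  ring

theorem hasDerivAt_mfderiv_comp_flow {E F : Type*} [NormedAddCommGroup E] [NormedSpace ℝ E]
    [NormedAddCommGroup F] [NormedSpace ℝ F] {H : Type*} [TopologicalSpace H]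
    {I : ModelWithCorners ℝ E H} [I.Boundaryless] {M : Type*} [TopologicalSpace M]
    [ChartedSpace H M] [IsManifold I 2 M] {X : (z : M) → TangentSpace I z} {φ : ℝ → M → M}
    (hφ0 : ∀ z, φ 0 z = z) (hφsmooth : ContMDiff (𝓘(ℝ).prod I) I 2 fun p : ℝ × M => φ p.1 p.2)
    (hφflow : ∀ z, IsMIntegralCurve (fun t => φ t z) X) {f : M → F}
    (hf : ContMDiff I 𝓘(ℝ, F) 2 f) (z : M) (v : TangentSpace I z) :
    HasDerivAt (fun t => show F from mfderiv I 𝓘(ℝ, F) (f ∘ φ t) z v)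
      (show F from mfderiv I 𝓘(ℝ, F) (fun w => show F from mfderiv I 𝓘(ℝ, F) f w (X w)) z v) 0 := by
  set e := extChartAt I z
  set G : ℝ × E → F := fun p => f (φ p.1 (e.symm p.2))
  set Xf : M → F := fun w => mfderiv I 𝓘(ℝ, F) f w (X w)
  have hfd : ∀ w, MDifferentiableAt I 𝓘(ℝ, F) f w := fun w => (hf w).mdifferentiableAt (by simp)
  have hφt : ∀ t, MDifferentiable I I (φ t) := fun t =>
    (hφsmooth.comp (contMDiff_const.prodMk contMDiff_id)).mdifferentiable (by simp)
  have hG : ContDiffAt ℝ 2 G (0, e z) :=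
    (hf.comp hφsmooth).contDiffAt_comp_prodMap_extChartAt_symm 0 z
  have hXf : (fun x => deriv (fun t => G (t, x)) 0) = Xf ∘ e.symm := funext fun x => by
    have h := ((hφflow (e.symm x)).hasDerivAt_comp (t := 0) (hfd _)).deriv
    rw [hφ0] at h
    exact h
  have hXf_diff : DifferentiableAt ℝ (Xf ∘ e.symm) (e z) :=
    hXf ▸ hG.hasFDerivAt_deriv_slice.differentiableAt
  have h := hG.hasDerivAt_fderiv_slice_apply v
  rw [hXf, ← hXf_diff.mdifferentiableAt_of_comp_extChartAt_symm
    |>.mfderiv_eq_fderiv_comp_extChartAt_symm] at h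
  exact h.congr_of_eventuallyEq (.of_forall fun t => congrArg (· v)
    ((hfd _).comp z (hφt t z)).mfderiv_eq_fderiv_comp_extChartAt_symm)

theorem stmt_2_general
    {E : Type*} [NormedAddCommGroup E] [NormedSpace ℝ E]
    {HM : Type*} [TopologicalSpace HM] {I : ModelWithCorners ℝ E HM} [I.Boundaryless]
    {M : Type*} [TopologicalSpace M] [ChartedSpace HM M] [IsManifold I ((⊤ : ℕ∞) : WithTop ℕ∞) M]
    (X : ∀ z : M, TangentSpace I z)
    (φ : ℝ → M → M)
    (hφ0 : ∀ z, φ 0 z = z)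
    (hφsmooth : ContMDiff (𝓘(ℝ).prod I) I (⊤ : ℕ∞) fun p : ℝ × M => φ p.1 p.2)
    (hφflow : ∀ z : M, IsMIntegralCurve (fun t => φ t z) X)
    (U : ∀ z : M, TangentSpace I z)
    (r : M → ℝ) (hr : Continuous r)
    (hconj : ∀ (t : ℝ) (z : M), mfderiv I I (φ t) z (U z) =
      Real.exp (∫ s in (0:ℝ)..t, r (φ s z)) • U (φ t z)) :
    ∀ f : M → ℝ, ContMDiff I 𝓘(ℝ) (⊤ : ℕ∞) f → ∀ z : M,
      HasDerivAt (fun t => (show ℝ from mfderiv I 𝓘(ℝ) f (φ t z) (U (φ t z))))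
        ((show ℝ from mfderiv I 𝓘(ℝ) (fun w => show ℝ from mfderiv I 𝓘(ℝ) f w (X w)) z (U z))
          - r z * (show ℝ from mfderiv I 𝓘(ℝ) f z (U z))) 0 := by
  intro f hf z
  have h2 : (2 : WithTop ℕ∞) ≤ ((⊤ : ℕ∞) : WithTop ℕ∞) := WithTop.coe_le_coe.mpr le_top
  have hg := hasDerivAt_mfderiv_comp_flow hφ0 (hφsmooth.of_le h2) hφflow (hf.of_le h2) z (U z)
  have hg_eq : ∀ t, (show ℝ from mfderiv I 𝓘(ℝ) (f ∘ φ t) z (U z)) =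
      Real.exp (∫ s in (0:ℝ)..t, r (φ s z)) *
        (show ℝ from mfderiv I 𝓘(ℝ) f (φ t z) (U (φ t z))) := by
    intro t
    have hφt : MDifferentiableAt I I (φ t) z :=
      (hφsmooth.comp (contMDiff_const.prodMk contMDiff_id)).mdifferentiableAt (by simp)
    rw [mfderiv_comp_apply z ((hf _).mdifferentiableAt (by simp)) hφt, hconj, map_smul]
    rfl
  have ha : HasDerivAt (fun t => ∫ s in (0:ℝ)..t, r (φ s z)) (r z) 0 := by
    have hρ : Continuous fun s => r (φ s z) :=
      hr.comp (hφsmooth.continuous.comp (continuous_id.prodMk continuous_const))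
    simpa [hφ0] using (hρ.integral_hasStrictDerivAt 0 0).hasDerivAt
  have key := hasDerivAt_of_eq_exp_mul ha hg hg_eq
  rw [intervalIntegral.integral_same, neg_zero, Real.exp_zero, one_mul,
    show φ 0 = id from funext hφ0, Function.comp_id] at key
  exact key

/-- If `U` is a `C¹` vector field with
`dφ_t(z)·U(z) = exp(∫_0^t r(φ_s z) ds)·U(φ_t z)` for a continuous function `r`, then the
Lie bracket satisfies `[X,U] = −r·U`: for every smooth `f` and every `z`, the map
`t ↦ (Uf)(φ_t z)` is differentiable at `0` with derivative `(U(Xf))(z) − r(z)·(Uf)(z)`. -/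
theorem stmt_2
    {E : Type*} [NormedAddCommGroup E] [NormedSpace ℝ E]
    {HM : Type*} [TopologicalSpace HM] {I : ModelWithCorners ℝ E HM} [I.Boundaryless]
    {M : Type*} [TopologicalSpace M] [ChartedSpace HM M] [IsManifold I ((⊤ : ℕ∞) : WithTop ℕ∞) M]
    [CompactSpace M]
    (X : ∀ z : M, TangentSpace I z)
    (hX : ContMDiff I I.tangent (⊤ : ℕ∞) fun z => (⟨z, X z⟩ : TangentBundle I M))
    (φ : ℝ → M → M)
    (hφ0 : ∀ z, φ 0 z = z)
    (hφadd : ∀ t s z, φ (t + s) z = φ t (φ s z))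
    (hφsmooth : ContMDiff (𝓘(ℝ).prod I) I (⊤ : ℕ∞) fun p : ℝ × M => φ p.1 p.2)
    (hφflow : ∀ z : M, IsMIntegralCurve (fun t => φ t z) X)
    (U : ∀ z : M, TangentSpace I z)
    (hU : ContMDiff I I.tangent 1 fun z => (⟨z, U z⟩ : TangentBundle I M))
    (r : M → ℝ) (hr : Continuous r)
    (hconj : ∀ (t : ℝ) (z : M), mfderiv I I (φ t) z (U z) =
      Real.exp (∫ s in (0:ℝ)..t, r (φ s z)) • U (φ t z)) :
    ∀ f : M → ℝ, ContMDiff I 𝓘(ℝ) (⊤ : ℕ∞) f → ∀ z : M,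
      HasDerivAt (fun t => (show ℝ from mfderiv I 𝓘(ℝ) f (φ t z) (U (φ t z))))
        ((show ℝ from mfderiv I 𝓘(ℝ) (fun w => show ℝ from mfderiv I 𝓘(ℝ) f w (X w)) z (U z))
          - r z * (show ℝ from mfderiv I 𝓘(ℝ) f z (U z))) 0 :=
  stmt_2_general X φ hφ0 hφsmooth hφflow U r hr hconj
end

section
/- Let M be a compact smooth manifold without boundary, X a smooth vector field with flow φ_t, and W : M → ℝ continuous with W_max := lim_{t→+∞} sup_{z∈M} (1/t)∫_{-t}^0 W(φ_s(z)) ds. Let λ ∈ ℂ with Re(λ) > W_max. If ω : M → ℂ is continuous and for every z ∈ M the map t ↦ ω(φ_t(z)) is differentiable with derivative (d/dt) ω(φ_t(z)) = (W(φ_t(z)) − λ)·ω(φ_t(z)) for all t ∈ ℝ, then ω ≡ 0. In other words, the operator P' − λ = −X + W − λ has no nonzero continuous solutions of (P'−λ)ω = 0 in the region Re(λ) > W_max. -/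
/-!
Along each orbit, `u ↦ ω (φ u z)` solves a scalar linear ODE, so
`|ω z| = |ω (φ (-t) z)| · exp (∫_{-t}^0 W (φ s z) ds - t Re λ)`.
The first factor is bounded by compactness, and for large `t` the integral is at most `t μ`
for any `μ` with `W_max < μ < Re λ`; letting `t → ∞` gives `ω z = 0`.
-/

open Filter
open scoped Manifold Topology

theorem eq_mul_cexp_integral_of_hasDerivAt_mul {f g : ℝ → ℂ} (hg : Continuous g)
    (hf : ∀ t, HasDerivAt f (g t * f t) t) (a b : ℝ) :
    f b = f a * Complex.exp (∫ s in a..b, g s) := by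
  set G : ℝ → ℂ := fun u => ∫ s in a..u, g s
  have hG : ∀ u, HasDerivAt G (g u) u := fun u => (hg.integral_hasStrictDerivAt a u).hasDerivAt
  have hconst : ∀ u, HasDerivAt (fun u => f u * Complex.exp (-G u)) 0 u := fun u =>
    ((hf u).mul (hG u).neg.cexp).congr_deriv (by simp only [Pi.neg_apply]; ring)
  have hba := is_const_of_deriv_eq_zero (fun u => (hconst u).differentiableAt)
    (fun u => (hconst u).deriv) b a
  simp only [G, intervalIntegral.integral_same, neg_zero, Complex.exp_zero, mul_one] at hba
  rw [← hba, mul_assoc, ← Complex.exp_add, neg_add_cancel, Complex.exp_zero, mul_one]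

theorem norm_eq_mul_exp_integral_of_hasDerivAt_sub_mul {f : ℝ → ℂ} {w : ℝ → ℝ}
    {lam : ℂ} (hw : Continuous w) (hf : ∀ t, HasDerivAt f ((w t - lam) * f t) t) (a b : ℝ) :
    ‖f b‖ = ‖f a‖ * Real.exp ((∫ s in a..b, w s) - (b - a) * lam.re) := by
  have hwC : Continuous fun s => (w s : ℂ) := by fun_prop
  have hg : Continuous fun s => (w s : ℂ) - lam := by fun_prop
  rw [eq_mul_cexp_integral_of_hasDerivAt_mul hg hf a b, norm_mul,
    Complex.norm_exp, intervalIntegral.integral_sub (hwC.intervalIntegrable _ _)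
      intervalIntegrable_const, intervalIntegral.integral_ofReal, intervalIntegral.integral_const]
  simp [Complex.real_smul]

theorem bddAbove_range_average_of_norm_le {ι : Type*} {F : ι → ℝ → ℝ} {C : ℝ}
    (hF : ∀ i s, ‖F i s‖ ≤ C) (t : ℝ) :
    BddAbove (Set.range fun i => (1 / t) * ∫ s in (-t)..0, F i s) := by
  refine ⟨|C|, ?_⟩
  rintro _ ⟨i, rfl⟩
  have hint : |∫ s in (-t)..0, F i s| ≤ |C| * |t| := by
    simpa using intervalIntegral.norm_integral_le_of_norm_le_const (a := -t) (b := 0)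
      (fun s _ => (hF i s).trans (le_abs_self C))
  calc (1 / t) * ∫ s in (-t)..0, F i s ≤ |1 / t| * |∫ s in (-t)..0, F i s| := by
        rw [← abs_mul]; exact le_abs_self _
    _ ≤ |1 / t| * (|C| * |t|) := by gcongr
    _ ≤ |C| := by
        rcases eq_or_ne t 0 with rfl | ht
        · simp
        · rw [abs_div, abs_one, div_mul_eq_mul_div, one_mul, mul_div_assoc,
            div_self (abs_ne_zero.2 ht), mul_one]

theorem eq_zero_of_eventually_norm_le_mul_exp {E : Type*} [NormedAddCommGroup E] {x : E}
    {C c : ℝ} (hc : c < 0) (h : ∀ᶠ t in atTop, ‖x‖ ≤ C * Real.exp (c * t)) : x = 0 := by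
  have hlim : Tendsto (fun t => C * Real.exp (c * t)) atTop (𝓝 0) := by
    simpa using (Real.tendsto_exp_atBot.comp (tendsto_id.const_mul_atTop_of_neg hc)).const_mul C
  exact norm_le_zero_iff.1 (ge_of_tendsto hlim h)

theorem stmt_10_general
    {E : Type*} [NormedAddCommGroup E] [NormedSpace ℝ E]
    {HM : Type*} [TopologicalSpace HM] {I : ModelWithCorners ℝ E HM}
    {M : Type*} [TopologicalSpace M] [ChartedSpace HM M]
    [CompactSpace M]
    (φ : ℝ → M → M)
    (hφ0 : ∀ z, φ 0 z = z)
    (hφsmooth : ContMDiff (𝓘(ℝ).prod I) I (⊤ : ℕ∞) fun p : ℝ × M => φ p.1 p.2)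
    (W : M → ℝ) (hW : Continuous W)
    (Wmax : ℝ)
    (hWmax : Tendsto (fun t : ℝ => ⨆ z : M, (1/t) * ∫ s in (-t)..(0:ℝ), W (φ s z))
      atTop (𝓝 Wmax))
    (lam : ℂ) (hlam : Wmax < lam.re)
    (ω : M → ℂ) (hω : Continuous ω)
    (hode : ∀ (z : M) (t : ℝ), HasDerivAt (fun u => ω (φ u z))
      (((W (φ t z) : ℂ) - lam) * ω (φ t z)) t) :
    ∀ z : M, ω z = 0 := by
  intro z
  obtain ⟨μ, hWμ, hμlam⟩ := exists_between hlam
  obtain ⟨C, hC⟩ := hω.bounded_above_of_compact_support (.of_compactSpace ω)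
  obtain ⟨CW, hCW⟩ := hW.bounded_above_of_compact_support (.of_compactSpace W)
  have hWφ : Continuous fun s => W (φ s z) :=
    hW.comp (hφsmooth.continuous.comp (continuous_id.prodMk continuous_const))
  refine eq_zero_of_eventually_norm_le_mul_exp (C := C) (sub_neg.2 hμlam) ?_
  filter_upwards [hWmax.eventually_le_const hWμ, eventually_gt_atTop 0] with t hsup ht
  have havg : (1 / t) * ∫ s in (-t)..0, W (φ s z) ≤ μ :=
    (le_ciSup (bddAbove_range_average_of_norm_le (fun w s => hCW (φ s w)) t) z).trans hsup
  have hint : ∫ s in (-t)..0, W (φ s z) ≤ t * μ := by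
    rwa [one_div, inv_mul_le_iff₀ ht] at havg
  calc ‖ω z‖
        = ‖ω (φ (-t) z)‖ * Real.exp ((∫ s in (-t)..0, W (φ s z)) - (0 - -t) * lam.re) := by
        simpa [hφ0] using norm_eq_mul_exp_integral_of_hasDerivAt_sub_mul hWφ (hode z) (-t) 0
    _ ≤ C * Real.exp ((μ - lam.re) * t) := by
        have hexp : (∫ s in (-t)..0, W (φ s z)) - (0 - -t) * lam.re ≤ (μ - lam.re) * t := by
          linarith
        exact mul_le_mul (hC _) (Real.exp_le_exp.2 hexp) (Real.exp_nonneg _)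
          ((norm_nonneg _).trans (hC z))

/-- For a continuous potential `W` with upper average `W_max` and
`Re λ > W_max`, the operator `P' − λ = −X + W − λ` has no nonzero continuous solution of
`(P'−λ)ω = 0`: if `ω` is continuous and `(d/dt) ω(φ_t z) = (W(φ_t z) − λ) ω(φ_t z)` for all
`t` and `z`, then `ω ≡ 0`. -/
theorem stmt_10
    {E : Type*} [NormedAddCommGroup E] [NormedSpace ℝ E]
    {HM : Type*} [TopologicalSpace HM] {I : ModelWithCorners ℝ E HM} [I.Boundaryless]
    {M : Type*} [TopologicalSpace M] [ChartedSpace HM M] [IsManifold I (⊤ : ℕ∞) M]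
    [CompactSpace M]
    (X : ∀ z : M, TangentSpace I z)
    (hX : ContMDiff I I.tangent (⊤ : ℕ∞) fun z => (⟨z, X z⟩ : TangentBundle I M))
    (φ : ℝ → M → M)
    (hφ0 : ∀ z, φ 0 z = z)
    (hφadd : ∀ t s z, φ (t + s) z = φ t (φ s z))
    (hφsmooth : ContMDiff (𝓘(ℝ).prod I) I (⊤ : ℕ∞) fun p : ℝ × M => φ p.1 p.2)
    (hφflow : ∀ z : M, IsMIntegralCurve (fun t => φ t z) X)
    (W : M → ℝ) (hW : Continuous W)
    (Wmax : ℝ)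
    (hWmax : Tendsto (fun t : ℝ => ⨆ z : M, (1/t) * ∫ s in (-t)..(0:ℝ), W (φ s z))
      atTop (𝓝 Wmax))
    (lam : ℂ) (hlam : Wmax < lam.re)
    (ω : M → ℂ) (hω : Continuous ω)
    (hode : ∀ (z : M) (t : ℝ), HasDerivAt (fun u => ω (φ u z))
      (((W (φ t z) : ℂ) - lam) * ω (φ t z)) t) :
    ∀ z : M, ω z = 0 :=
  stmt_10_general φ hφ0 hφsmooth W hW Wmax hWmax lam hlam ω hω hode
end

section
/- Let M be a compact smooth manifold without boundary, X a smooth vector field with flow φ_t, and m a finite Borel measure invariant under every φ_t. Let U_- be a continuous vector field, r_- ∈ C(M), and D ∈ C(M) such that: (i) for every f ∈ C^∞(M), ∫_M (U_-f) dm = −∫_M D·f dm (i.e. D is the divergence of U_- with respect to m); (ii) for every f ∈ C^∞(M), the function U_-f is differentiable along the flow with X(U_-f) = U_-(Xf) − r_-·(U_-f) (the commutation relation [X,U_-] = −r_- U_-), and X(U_-f) is continuous. Then D is a weak solution of (−X − r_-)D = U_-(r_-) with respect to m: for every f ∈ C^∞(M), ∫_M D·(Xf − r_-·f) dm = −∫_M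 r_-·(U_-f + D·f) dm. -/
open Filter MeasureTheory
open scoped Manifold

/-!
Invariance of `m` under the flow gives `∫ X g dm = 0` for every `g` differentiable along the
flow with continuous derivative, since `t ↦ ∫ g ∘ φ t dm` is constant. For `g = U₋f` the
commutation relation turns this into `∫ U₋(Xf) dm = ∫ r₋ U₋f dm`, while the divergence identity
applied to the smooth function `Xf` gives `∫ U₋(Xf) dm = -∫ D Xf dm`. Hence
`∫ D Xf dm = -∫ r₋ U₋f dm`, which is the claim after adding `-∫ D r₋ f dm` to both sides.
-/

section DerivativeAlongVectorField

variable {𝕜 : Type*} [NontriviallyNormedField 𝕜]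
  {E : Type*} [NormedAddCommGroup E] [NormedSpace 𝕜 E]
  {H : Type*} [TopologicalSpace H] {I : ModelWithCorners 𝕜 E H}
  {M : Type*} [TopologicalSpace M] [ChartedSpace H M] [IsManifold I 1 M]
  {F : Type*} [NormedAddCommGroup F] [NormedSpace 𝕜 F]
  {f : M → F} {V : ∀ z : M, TangentSpace I z} {m n : WithTop ℕ∞}

theorem ContMDiff.contMDiff_mfderiv_apply (hf : ContMDiff I 𝓘(𝕜, F) n f)
    (hV : ContMDiff I I.tangent m fun z => (⟨z, V z⟩ : TangentBundle I M)) (hmn : m + 1 ≤ n) :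
    ContMDiff I 𝓘(𝕜, F) m fun z => show F from mfderiv I 𝓘(𝕜, F) f z (V z) :=
  (contMDiff_snd_tangentBundle_modelSpace F 𝓘(𝕜, F)).comp
    ((hf.contMDiff_tangentMap hmn).comp hV)

theorem ContMDiff.continuous_mfderiv_apply (hf : ContMDiff I 𝓘(𝕜, F) n f)
    (hV : Continuous fun z => (⟨z, V z⟩ : TangentBundle I M)) (hn : 1 ≤ n) :
    Continuous fun z => show F from mfderiv I 𝓘(𝕜, F) f z (V z) :=
  (contMDiff_snd_tangentBundle_modelSpace F 𝓘(𝕜, F) (n := 0)).continuous.comp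
    ((hf.continuous_tangentMap hn).comp hV)

end DerivativeAlongVectorField

theorem hasDerivAt_comp_flow {M G : Type*} [NormedAddCommGroup G] [NormedSpace ℝ G]
    {φ : ℝ → M → M} (hφadd : ∀ t s z, φ (t + s) z = φ t (φ s z)) {g h : M → G}
    (hgh : ∀ z, HasDerivAt (fun t => g (φ t z)) (h z) 0) (z : M) (s : ℝ) :
    HasDerivAt (fun t => g (φ t z)) (h (φ s z)) s := by
  have := HasDerivAt.comp_sub_const s s (sub_self s ▸ hgh (φ s z))
  simpa only [← hφadd, sub_add_cancel] using this

section CompactSpace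

variable {M : Type*} [TopologicalSpace M] [CompactSpace M] [MeasurableSpace M] [BorelSpace M]
  {μ : Measure M} [IsFiniteMeasure μ]

theorem Continuous.integrable_of_compactSpace {G : Type*} [NormedAddCommGroup G] {g : M → G}
    (hg : Continuous g) : Integrable g μ :=
  hg.integrable_of_hasCompactSupport (.of_compactSpace g)

theorem integral_eq_zero_of_hasDerivAt_comp_flow {φ : ℝ → M → M}
    (hφ0 : ∀ z, φ 0 z = z) (hφadd : ∀ t s z, φ (t + s) z = φ t (φ s z))
    (hφ : Continuous fun p : ℝ × M => φ p.1 p.2) (hμ : ∀ t, MeasurePreserving (φ t) μ μ)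
    {g h : M → ℝ} (hg : Continuous g) (hh : Continuous h)
    (hgh : ∀ z, HasDerivAt (fun t => g (φ t z)) (h z) 0) :
    ∫ z, h z ∂μ = 0 := by
  have hφt (t : ℝ) : Continuous (φ t) := hφ.comp (.prodMk_right t)
  have hconst : (fun t => ∫ z, g (φ t z) ∂μ) = fun _ => ∫ z, g z ∂μ := funext fun t => by
    rw [← integral_map (hμ t).measurable.aemeasurable, (hμ t).map_eq]
    exact hg.aestronglyMeasurable
  obtain ⟨C, hC⟩ := isCompact_univ.exists_bound_of_continuousOn hh.continuousOn
  -- differentiate the constant function `t ↦ ∫ g ∘ φ t` under the integral sign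
  obtain ⟨-, hderiv⟩ := hasDerivAt_integral_of_dominated_loc_of_deriv_le (μ := μ)
    (F := fun t z => g (φ t z)) (F' := fun t z => h (φ t z)) (x₀ := 0) univ_mem
    (.of_forall fun t => (hg.comp (hφt t)).aestronglyMeasurable)
    (hg.comp (hφt 0)).integrable_of_compactSpace (hh.comp (hφt 0)).aestronglyMeasurable
    (.of_forall fun z t _ => hC _ (Set.mem_univ _)) (integrable_const C)
    (.of_forall fun z t _ => hasDerivAt_comp_flow hφadd hgh z t)
  rw [hconst] at hderiv
  simpa [hφ0] using hderiv.unique (hasDerivAt_const (0 : ℝ) _)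

end CompactSpace

theorem stmt_12_general
    {E : Type*} [NormedAddCommGroup E] [NormedSpace ℝ E]
    {HM : Type*} [TopologicalSpace HM] {I : ModelWithCorners ℝ E HM}
    {M : Type*} [TopologicalSpace M] [ChartedSpace HM M] [IsManifold I (⊤ : ℕ∞) M]
    [CompactSpace M] [MeasurableSpace M] [BorelSpace M]
    (X : ∀ z : M, TangentSpace I z)
    (hX : ContMDiff I I.tangent (⊤ : ℕ∞) fun z => (⟨z, X z⟩ : TangentBundle I M))
    (φ : ℝ → M → M)
    (hφ0 : ∀ z, φ 0 z = z)
    (hφadd : ∀ t s z, φ (t + s) z = φ t (φ s z))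
    (hφsmooth : ContMDiff (𝓘(ℝ).prod I) I (⊤ : ℕ∞) fun p : ℝ × M => φ p.1 p.2)
    (m : Measure M) [IsFiniteMeasure m]
    (hm : ∀ t : ℝ, MeasurePreserving (φ t) m m)
    (Um : ∀ z : M, TangentSpace I z)
    (hUm : Continuous fun z => (⟨z, Um z⟩ : TangentBundle I M))
    (rm : M → ℝ) (hrm : Continuous rm)
    (D : M → ℝ) (hD : Continuous D)
    (hdiv : ∀ f : M → ℝ, ContMDiff I 𝓘(ℝ) (⊤ : ℕ∞) f →
      ∫ z, (show ℝ from mfderiv I 𝓘(ℝ) f z (Um z)) ∂m = -∫ z, D z * f z ∂m)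
    (hcomm : ∀ f : M → ℝ, ContMDiff I 𝓘(ℝ) (⊤ : ℕ∞) f → ∀ z : M,
      HasDerivAt (fun t => (show ℝ from mfderiv I 𝓘(ℝ) f (φ t z) (Um (φ t z))))
        ((show ℝ from mfderiv I 𝓘(ℝ)
            (fun w => (show ℝ from mfderiv I 𝓘(ℝ) f w (X w))) z (Um z))
          - rm z * (show ℝ from mfderiv I 𝓘(ℝ) f z (Um z))) 0) :
    ∀ f : M → ℝ, ContMDiff I 𝓘(ℝ) (⊤ : ℕ∞) f →
      ∫ z, D z * ((show ℝ from mfderiv I 𝓘(ℝ) f z (X z)) - rm z * f z) ∂m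
        = -∫ z, rm z * ((show ℝ from mfderiv I 𝓘(ℝ) f z (Um z)) + D z * f z) ∂m := by
  intro f hf
  set Xf : M → ℝ := fun z => show ℝ from mfderiv I 𝓘(ℝ) f z (X z)
  set Uf : M → ℝ := fun z => show ℝ from mfderiv I 𝓘(ℝ) f z (Um z)
  set UXf : M → ℝ := fun z => show ℝ from mfderiv I 𝓘(ℝ) Xf z (Um z)
  show ∫ z, D z * (Xf z - rm z * f z) ∂m = -∫ z, rm z * (Uf z + D z * f z) ∂m
  have hXf : ContMDiff I 𝓘(ℝ) (⊤ : ℕ∞) Xf := hf.contMDiff_mfderiv_apply hX (by simp)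
  have hUf : Continuous Uf := hf.continuous_mfderiv_apply hUm (by simp)
  have hUXf : Continuous UXf := hXf.continuous_mfderiv_apply hUm (by simp)
  have hrUf : Continuous fun z => rm z * Uf z := hrm.mul hUf
  have hflow : ∫ z, UXf z - rm z * Uf z ∂m = 0 :=
    integral_eq_zero_of_hasDerivAt_comp_flow hφ0 hφadd hφsmooth.continuous hm hUf
      (hUXf.sub hrUf) (hcomm f hf)
  rw [integral_sub hUXf.integrable_of_compactSpace hrUf.integrable_of_compactSpace,
    hdiv Xf hXf] at hflow
  have hf_cont := hf.continuous
  have hXf_cont := hXf.continuous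
  have hsplit : ∫ z, D z * (Xf z - rm z * f z) ∂m + ∫ z, rm z * (Uf z + D z * f z) ∂m
      = ∫ z, D z * Xf z ∂m + ∫ z, rm z * Uf z ∂m := by
    rw [← integral_add, ← integral_add]
    · congr 1; ext z; ring
    all_goals exact Continuous.integrable_of_compactSpace (by fun_prop)
  linarith

/-- Let `m` be a finite flow-invariant Borel measure, `U₋` a continuous
vector field with divergence `D` with respect to `m` (i.e. `∫ U₋f dm = −∫ D f dm` for all
smooth `f`) satisfying the commutation relation `X(U₋f) = U₋(Xf) − r₋·(U₋f)`.  Then `D` is a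
weak solution of `(−X − r₋)D = U₋(r₋)`: for every smooth `f`,
`∫ D·(Xf − r₋ f) dm = −∫ r₋·(U₋f + D f) dm`. -/
theorem stmt_12
    {E : Type*} [NormedAddCommGroup E] [NormedSpace ℝ E]
    {HM : Type*} [TopologicalSpace HM] {I : ModelWithCorners ℝ E HM} [I.Boundaryless]
    {M : Type*} [TopologicalSpace M] [ChartedSpace HM M] [IsManifold I (⊤ : ℕ∞) M]
    [CompactSpace M] [MeasurableSpace M] [BorelSpace M]
    (X : ∀ z : M, TangentSpace I z)
    (hX : ContMDiff I I.tangent (⊤ : ℕ∞) fun z => (⟨z, X z⟩ : TangentBundle I M))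
    (φ : ℝ → M → M)
    (hφ0 : ∀ z, φ 0 z = z)
    (hφadd : ∀ t s z, φ (t + s) z = φ t (φ s z))
    (hφsmooth : ContMDiff (𝓘(ℝ).prod I) I (⊤ : ℕ∞) fun p : ℝ × M => φ p.1 p.2)
    (hφflow : ∀ z : M, IsMIntegralCurve (fun t => φ t z) X)
    (m : Measure M) [IsFiniteMeasure m]
    (hm : ∀ t : ℝ, MeasurePreserving (φ t) m m)
    (Um : ∀ z : M, TangentSpace I z)
    (hUm : Continuous fun z => (⟨z, Um z⟩ : TangentBundle I M))
    (rm : M → ℝ) (hrm : Continuous rm)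
    (D : M → ℝ) (hD : Continuous D)
    (hdiv : ∀ f : M → ℝ, ContMDiff I 𝓘(ℝ) (⊤ : ℕ∞) f →
      ∫ z, (show ℝ from mfderiv I 𝓘(ℝ) f z (Um z)) ∂m = -∫ z, D z * f z ∂m)
    (hcomm : ∀ f : M → ℝ, ContMDiff I 𝓘(ℝ) (⊤ : ℕ∞) f → ∀ z : M,
      HasDerivAt (fun t => (show ℝ from mfderiv I 𝓘(ℝ) f (φ t z) (Um (φ t z))))
        ((show ℝ from mfderiv I 𝓘(ℝ)
            (fun w => (show ℝ from mfderiv I 𝓘(ℝ) f w (X w))) z (Um z))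
          - rm z * (show ℝ from mfderiv I 𝓘(ℝ) f z (Um z))) 0)
    (hcont : ∀ f : M → ℝ, ContMDiff I 𝓘(ℝ) (⊤ : ℕ∞) f →
      Continuous fun z : M =>
        (show ℝ from mfderiv I 𝓘(ℝ)
            (fun w => (show ℝ from mfderiv I 𝓘(ℝ) f w (X w))) z (Um z))
          - rm z * (show ℝ from mfderiv I 𝓘(ℝ) f z (Um z))) :
    ∀ f : M → ℝ, ContMDiff I 𝓘(ℝ) (⊤ : ℕ∞) f →
      ∫ z, D z * ((show ℝ from mfderiv I 𝓘(ℝ) f z (X z)) - rm z * f z) ∂m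
        = -∫ z, rm z * ((show ℝ from mfderiv I 𝓘(ℝ) f z (Um z)) + D z * f z) ∂m :=
  stmt_12_general X hX φ hφ0 hφadd hφsmooth m hm Um hUm rm hrm D hD hdiv hcomm
end

section
/- Let M be a compact smooth manifold without boundary, X a smooth vector field with flow φ_t. Let U_+, U_- be continuous nowhere-vanishing vector fields and r_+, r_- : M → ℝ continuous functions with dφ_t(z)·U_+(z) = exp(−∫_0^t r_+(φ_s(z)) ds)·U_+(φ_t(z)) and dφ_t(z)·U_-(z) = exp(∫_0^t r_-(φ_s(z)) ds)·U_-(φ_t(z)) for all t, z. Let β be a continuous 2-form on M invariant under the flow (β_{φ_t(z)}(dφ_t(z)u, dφ_t(z)v) = β_z(u,v) for all t, z, u, v ∈ T_zM) such that g(z) := β_z(U_+(z), U_-(z)) is nowhere vanishing. Then there exists C ≥ 1 such that C^{-1} ≤ exp(∫_0^t (r_-(φ_s(z)) − r_+(φ_s(z))) ds) ≤ C for all t ∈ ℝ and z ∈ M; consequently (1/t)∫_0^t (r_- − r_+)(φ_s(z)) ds → 0 uniformly in z as t → +∞, and the expansion rates agree: lim_{t→∞} sup_z (1/t)∫_0^t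 r_-∘φ_s ds = lim_{t→∞} sup_z (1/t)∫_0^t r_+∘φ_s ds and lim_{t→∞} inf_z (1/t)∫_0^t r_-∘φ_s ds = lim_{t→∞} inf_z (1/t)∫_0^t r_+∘φ_s ds. -/
/-!
Flow invariance of `β` and the two conjugacy relations give
`exp (∫₀ᵗ (r₋ - r₊) ∘ φ_s ds) · g (φ_t z) = g z` for `g z = β_z (U₊ z, U₋ z)`. Since `g` is
continuous and nowhere zero on a compact manifold, `|g|` is pinched between two positive
constants, so the exponential factor is bounded above and below uniformly in `t` and `z`.
Hence `∫₀ᵗ (r₋ - r₊) ∘ φ_s ds` is uniformly bounded, its time average tends to `0` uniformly,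
and taking suprema or infima over `z` changes the time averages of `r₋` and `r₊` by a
quantity that tends to `0`.
-/

open Filter
open scoped Manifold Topology

theorem exists_one_le_forall_abs_div_le {M : Type*} [TopologicalSpace M] [CompactSpace M]
    {g : M → ℝ} (hg : Continuous g) (hg0 : ∀ z, g z ≠ 0) :
    ∃ C, 1 ≤ C ∧ ∀ z w, |g z / g w| ≤ C := by
  obtain ⟨A, hA⟩ := isCompact_univ.exists_bound_of_continuousOn hg.continuousOn
  obtain ⟨B, hB⟩ := isCompact_univ.exists_bound_of_continuousOn (hg.inv₀ hg0).continuousOn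
  refine ⟨max 1 (A * B), le_max_left _ _, fun z w => ?_⟩
  calc |g z / g w| = |g z| * |(g w)⁻¹| := by rw [div_eq_mul_inv, abs_mul]
    _ ≤ A * B :=
      mul_le_mul (hA z trivial) (hB w trivial) (abs_nonneg _) ((abs_nonneg _).trans (hA z trivial))
    _ ≤ max 1 (A * B) := le_max_right _ _

theorem exists_bounds_of_mul_comp_eq {α M : Type*} [TopologicalSpace M] [CompactSpace M]
    {g : M → ℝ} (hg : Continuous g) (hg0 : ∀ z, g z ≠ 0) {c : α → M → ℝ}
    (hc0 : ∀ a z, 0 < c a z) {ψ : α → M → M} (hc : ∀ a z, c a z * g (ψ a z) = g z) :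
    ∃ C, 1 ≤ C ∧ ∀ a z, C⁻¹ ≤ c a z ∧ c a z ≤ C := by
  obtain ⟨C, hC1, hC⟩ := exists_one_le_forall_abs_div_le hg hg0
  refine ⟨C, hC1, fun a z => ?_⟩
  have hratio : c a z = g z / g (ψ a z) := eq_div_of_mul_eq (hg0 _) (hc a z)
  constructor
  · rw [inv_le_comm₀ (by positivity) (hc0 a z), hratio, inv_div]
    exact (le_abs_self _).trans (hC _ _)
  · rw [hratio]
    exact (le_abs_self _).trans (hC _ _)

theorem abs_le_log_of_inv_le_exp_of_exp_le {x C : ℝ} (h₁ : C⁻¹ ≤ Real.exp x)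
    (h₂ : Real.exp x ≤ C) : |x| ≤ Real.log C := by
  have hC : 0 < C := (Real.exp_pos x).trans_le h₂
  have hlow := (Real.log_le_iff_le_exp (inv_pos.2 hC)).2 h₁
  rw [Real.log_inv] at hlow
  exact abs_le.2 ⟨by linarith, (Real.le_log_iff_exp_le hC).2 h₂⟩

theorem abs_one_div_mul_intervalIntegral_le {f : ℝ → ℝ} {K : ℝ} (hf : ∀ s, |f s| ≤ K)
    (t : ℝ) : |(1 / t) * ∫ s in (0:ℝ)..t, f s| ≤ K := by
  have hint : |∫ s in (0:ℝ)..t, f s| ≤ K * |t| := by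
    simpa using intervalIntegral.norm_integral_le_of_norm_le_const (a := 0) (b := t) (f := f)
      fun s _ => (Real.norm_eq_abs _).trans_le (hf s)
  rcases eq_or_ne t 0 with rfl | ht
  · simpa using (abs_nonneg _).trans (hf 0)
  rw [abs_mul, abs_one_div, one_div_mul_eq_div, div_le_iff₀ (abs_pos.2 ht)]
  exact hint

theorem tendstoUniformly_one_div_mul_of_abs_le {α : Type*} {F : ℝ → α → ℝ} {K : ℝ}
    (hF : ∀ t z, |F t z| ≤ K) :
    TendstoUniformly (fun t z => (1 / t) * F t z) (fun _ => 0) atTop := by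
  rw [Metric.tendstoUniformly_iff]
  intro ε hε
  have hK : Tendsto (fun t : ℝ => K / t) atTop (𝓝 0) := tendsto_const_nhds.div_atTop tendsto_id
  filter_upwards [eventually_gt_atTop 0, hK.eventually (gt_mem_nhds hε)] with t ht hKt z
  rw [dist_comm, Real.dist_eq, sub_zero, abs_mul, abs_of_pos (one_div_pos.2 ht),
    one_div_mul_eq_div]
  exact (div_le_div_of_nonneg_right (hF t z) ht.le).trans_lt hKt

theorem abs_ciSup_sub_ciSup_le {ι : Type*} {f g : ι → ℝ} (hf : BddAbove (Set.range f))
    (hg : BddAbove (Set.range g)) {d : ℝ} (hd : 0 ≤ d) (h : ∀ i, |f i - g i| ≤ d) :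
    |(⨆ i, f i) - ⨆ i, g i| ≤ d := by
  rcases isEmpty_or_nonempty ι with hι | hι
  · simpa using hd
  refine abs_sub_le_iff.2 ⟨?_, ?_⟩ <;> rw [sub_le_iff_le_add] <;> refine ciSup_le fun i => ?_
  · linarith [le_ciSup hg i, (abs_le.1 (h i)).2]
  · linarith [le_ciSup hf i, (abs_le.1 (h i)).1]

theorem abs_ciInf_sub_ciInf_le {ι : Type*} {f g : ι → ℝ} (hf : BddBelow (Set.range f))
    (hg : BddBelow (Set.range g)) {d : ℝ} (hd : 0 ≤ d) (h : ∀ i, |f i - g i| ≤ d) :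
    |(⨅ i, f i) - ⨅ i, g i| ≤ d := by
  rcases isEmpty_or_nonempty ι with hι | hι
  · simpa using hd
  refine abs_sub_le_iff.2 ⟨?_, ?_⟩ <;> rw [sub_le_comm] <;> refine le_ciInf fun i => ?_
  · linarith [ciInf_le hf i, (abs_le.1 (h i)).2]
  · linarith [ciInf_le hg i, (abs_le.1 (h i)).1]

theorem TendstoUniformly.tendsto_dist_zero_of_forall_abs_sub_le {ι α : Type*} {l : Filter ι}
    {a b : ι → α → ℝ} (hab : TendstoUniformly (fun i z => a i z - b i z) (fun _ => 0) l)
    {F G : ι → ℝ} (hFG : ∀ i d, 0 ≤ d → (∀ z, |a i z - b i z| ≤ d) → |F i - G i| ≤ d) :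
    Tendsto (fun i => dist (F i) (G i)) l (𝓝 0) := by
  refine Metric.tendsto_nhds.2 fun ε hε => ?_
  filter_upwards [Metric.tendstoUniformly_iff.1 hab (ε / 2) (half_pos hε)] with i hi
  rw [dist_zero_right, Real.norm_eq_abs, abs_dist, Real.dist_eq]
  refine (hFG i (ε / 2) (half_pos hε).le fun z => ?_).trans_lt (half_lt_self hε)
  simpa [Real.dist_eq, abs_sub_comm] using (hi z).le

theorem tendsto_ciSup_iff_of_tendstoUniformly_sub {ι α : Type*} {l : Filter ι}
    {a b : ι → α → ℝ} (hab : TendstoUniformly (fun i z => a i z - b i z) (fun _ => 0) l)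
    (ha : ∀ i, BddAbove (Set.range (a i))) (hb : ∀ i, BddAbove (Set.range (b i))) (L : ℝ) :
    Tendsto (fun i => ⨆ z, a i z) l (𝓝 L) ↔ Tendsto (fun i => ⨆ z, b i z) l (𝓝 L) :=
  tendsto_iff_of_dist <| hab.tendsto_dist_zero_of_forall_abs_sub_le fun i _ hd h =>
    abs_ciSup_sub_ciSup_le (ha i) (hb i) hd h

theorem tendsto_ciInf_iff_of_tendstoUniformly_sub {ι α : Type*} {l : Filter ι}
    {a b : ι → α → ℝ} (hab : TendstoUniformly (fun i z => a i z - b i z) (fun _ => 0) l)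
    (ha : ∀ i, BddBelow (Set.range (a i))) (hb : ∀ i, BddBelow (Set.range (b i))) (L : ℝ) :
    Tendsto (fun i => ⨅ z, a i z) l (𝓝 L) ↔ Tendsto (fun i => ⨅ z, b i z) l (𝓝 L) :=
  tendsto_iff_of_dist <| hab.tendsto_dist_zero_of_forall_abs_sub_le fun i _ hd h =>
    abs_ciInf_sub_ciInf_le (ha i) (hb i) hd h

theorem isBounded_range_one_div_mul_intervalIntegral_comp {M : Type*} [TopologicalSpace M]
    [CompactSpace M] {f : M → ℝ} (hf : Continuous f) (φ : ℝ → M → M) (t : ℝ) :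
    Bornology.IsBounded (Set.range fun z => (1 / t) * ∫ s in (0:ℝ)..t, f (φ s z)) := by
  obtain ⟨K, hK⟩ := isCompact_univ.exists_bound_of_continuousOn hf.continuousOn
  refine isBounded_iff_forall_norm_le.2 ⟨K, ?_⟩
  rintro _ ⟨z, rfl⟩
  exact abs_one_div_mul_intervalIntegral_le (fun s => hK _ trivial) t

theorem stmt_16_general
    {E : Type*} [NormedAddCommGroup E] [NormedSpace ℝ E]
    {HM : Type*} [TopologicalSpace HM] {I : ModelWithCorners ℝ E HM}
    {M : Type*} [TopologicalSpace M] [ChartedSpace HM M]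
    [CompactSpace M]
    (φ : ℝ → M → M)
    (hφsmooth : ContMDiff (𝓘(ℝ).prod I) I (⊤ : ℕ∞) fun p : ℝ × M => φ p.1 p.2)
    (Up Um : ∀ z : M, TangentSpace I z)
    (rp rm : M → ℝ) (hrp : Continuous rp) (hrm : Continuous rm)
    (hconjp : ∀ (t : ℝ) (z : M), mfderiv I I (φ t) z (Up z) =
      Real.exp (-∫ s in (0:ℝ)..t, rp (φ s z)) • Up (φ t z))
    (hconjm : ∀ (t : ℝ) (z : M), mfderiv I I (φ t) z (Um z) =
      Real.exp (∫ s in (0:ℝ)..t, rm (φ s z)) • Um (φ t z))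
    (β : M → E →L[ℝ] E →L[ℝ] ℝ)
    (hβinv : ∀ (t : ℝ) (z : M) (u v : TangentSpace I z),
      β (φ t z) (show E from mfderiv I I (φ t) z u) (show E from mfderiv I I (φ t) z v)
        = β z (show E from u) (show E from v))
    (hgcont : Continuous fun z : M => β z (show E from Up z) (show E from Um z))
    (hg : ∀ z : M, β z (show E from Up z) (show E from Um z) ≠ 0) :
    (∃ C : ℝ, 1 ≤ C ∧ ∀ (t : ℝ) (z : M),
      C⁻¹ ≤ Real.exp (∫ s in (0:ℝ)..t, (rm (φ s z) - rp (φ s z))) ∧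
      Real.exp (∫ s in (0:ℝ)..t, (rm (φ s z) - rp (φ s z))) ≤ C) ∧
    TendstoUniformly
      (fun t : ℝ => fun z : M => (1/t) * ∫ s in (0:ℝ)..t, (rm (φ s z) - rp (φ s z)))
      (fun _ => 0) atTop ∧
    (∀ L : ℝ,
      Tendsto (fun t : ℝ => ⨆ z : M, (1/t) * ∫ s in (0:ℝ)..t, rm (φ s z)) atTop (𝓝 L) ↔
      Tendsto (fun t : ℝ => ⨆ z : M, (1/t) * ∫ s in (0:ℝ)..t, rp (φ s z)) atTop (𝓝 L)) ∧
    (∀ L : ℝ,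
      Tendsto (fun t : ℝ => ⨅ z : M, (1/t) * ∫ s in (0:ℝ)..t, rm (φ s z)) atTop (𝓝 L) ↔
      Tendsto (fun t : ℝ => ⨅ z : M, (1/t) * ∫ s in (0:ℝ)..t, rp (φ s z)) atTop (𝓝 L)) := by
  have hint : ∀ (t : ℝ) (z : M), ∫ s in (0:ℝ)..t, (rm (φ s z) - rp (φ s z)) =
      (∫ s in (0:ℝ)..t, rm (φ s z)) - ∫ s in (0:ℝ)..t, rp (φ s z) := fun t z =>
    have horbit : Continuous fun s => φ s z :=
      hφsmooth.continuous.comp (continuous_id.prodMk continuous_const)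
    intervalIntegral.integral_sub ((hrm.comp horbit).intervalIntegrable 0 t)
      ((hrp.comp horbit).intervalIntegrable 0 t)
  have hcocycle : ∀ (t : ℝ) (z : M), Real.exp (∫ s in (0:ℝ)..t, (rm (φ s z) - rp (φ s z))) *
      β (φ t z) (Up (φ t z)) (Um (φ t z)) = β z (Up z) (Um z) := by
    intro t z
    have h := hβinv t z (Up z) (Um z)
    simp only [hconjp, hconjm] at h
    -- `TangentSpace I x` is `E` only up to unfolding, so the linearity rewrites need `erw`.
    erw [map_smul, map_smul, smul_apply, smul_eq_mul, smul_eq_mul] at h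
    rw [hint, Real.exp_sub, ← h, Real.exp_neg]
    field_simp
  obtain ⟨C, hC1, hC⟩ := exists_bounds_of_mul_comp_eq hgcont hg (fun _ _ => Real.exp_pos _)
    hcocycle
  have hunif := tendstoUniformly_one_div_mul_of_abs_le fun t z =>
    abs_le_log_of_inv_le_exp_of_exp_le (hC t z).1 (hC t z).2
  have hsub : TendstoUniformly (fun t z => (1 / t) * (∫ s in (0:ℝ)..t, rm (φ s z)) -
      (1 / t) * ∫ s in (0:ℝ)..t, rp (φ s z)) (fun _ => 0) atTop := by
    simpa only [hint, mul_sub] using hunif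
  have hbddm := isBounded_range_one_div_mul_intervalIntegral_comp hrm φ
  have hbddp := isBounded_range_one_div_mul_intervalIntegral_comp hrp φ
  exact ⟨⟨C, hC1, hC⟩, hunif,
    tendsto_ciSup_iff_of_tendstoUniformly_sub hsub (fun t => (hbddm t).bddAbove)
      fun t => (hbddp t).bddAbove,
    tendsto_ciInf_iff_of_tendstoUniformly_sub hsub (fun t => (hbddm t).bddBelow)
      fun t => (hbddp t).bddBelow⟩

/-- Suppose `U₊, U₋` are continuous nowhere-vanishing vector fields with
`dφ_t·U₊ = e^{−∫_0^t r₊∘φ_s ds} U₊∘φ_t` and `dφ_t·U₋ = e^{∫_0^t r₋∘φ_s ds} U₋∘φ_t`, and `β`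
is a continuous flow-invariant `2`-form such that `g(z) = β_z(U₊(z),U₋(z))` is continuous and
nowhere vanishing.  Then `exp(∫_0^t (r₋−r₊)∘φ_s ds)` is bounded above and below uniformly
in `t` and `z`, `(1/t)∫_0^t (r₋−r₊)∘φ_s ds → 0` uniformly, and the maximal/minimal expansion
rates of `r₋` and `r₊` agree. -/
theorem stmt_16
    {E : Type*} [NormedAddCommGroup E] [NormedSpace ℝ E]
    {HM : Type*} [TopologicalSpace HM] {I : ModelWithCorners ℝ E HM} [I.Boundaryless]
    {M : Type*} [TopologicalSpace M] [ChartedSpace HM M] [IsManifold I (⊤ : ℕ∞) M]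
    [CompactSpace M] [Nonempty M]
    (X : ∀ z : M, TangentSpace I z)
    (hX : ContMDiff I I.tangent (⊤ : ℕ∞) fun z => (⟨z, X z⟩ : TangentBundle I M))
    (φ : ℝ → M → M)
    (hφ0 : ∀ z, φ 0 z = z)
    (hφadd : ∀ t s z, φ (t + s) z = φ t (φ s z))
    (hφsmooth : ContMDiff (𝓘(ℝ).prod I) I (⊤ : ℕ∞) fun p : ℝ × M => φ p.1 p.2)
    (hφflow : ∀ z : M, IsMIntegralCurve (fun t => φ t z) X)
    (Up Um : ∀ z : M, TangentSpace I z)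
    (hUp : Continuous fun z => (⟨z, Up z⟩ : TangentBundle I M))
    (hUm : Continuous fun z => (⟨z, Um z⟩ : TangentBundle I M))
    (hUp0 : ∀ z, Up z ≠ 0) (hUm0 : ∀ z, Um z ≠ 0)
    (rp rm : M → ℝ) (hrp : Continuous rp) (hrm : Continuous rm)
    (hconjp : ∀ (t : ℝ) (z : M), mfderiv I I (φ t) z (Up z) =
      Real.exp (-∫ s in (0:ℝ)..t, rp (φ s z)) • Up (φ t z))
    (hconjm : ∀ (t : ℝ) (z : M), mfderiv I I (φ t) z (Um z) =
      Real.exp (∫ s in (0:ℝ)..t, rm (φ s z)) • Um (φ t z))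
    (β : M → E →L[ℝ] E →L[ℝ] ℝ) (hβcont : Continuous β)
    (hβalt : ∀ (z : M) (u v : E), β z u v = -β z v u)
    (hβinv : ∀ (t : ℝ) (z : M) (u v : TangentSpace I z),
      β (φ t z) (show E from mfderiv I I (φ t) z u) (show E from mfderiv I I (φ t) z v)
        = β z (show E from u) (show E from v))
    (hgcont : Continuous fun z : M => β z (show E from Up z) (show E from Um z))
    (hg : ∀ z : M, β z (show E from Up z) (show E from Um z) ≠ 0) :
    (∃ C : ℝ, 1 ≤ C ∧ ∀ (t : ℝ) (z : M),
      C⁻¹ ≤ Real.exp (∫ s in (0:ℝ)..t, (rm (φ s z) - rp (φ s z))) ∧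
      Real.exp (∫ s in (0:ℝ)..t, (rm (φ s z) - rp (φ s z))) ≤ C) ∧
    TendstoUniformly
      (fun t : ℝ => fun z : M => (1/t) * ∫ s in (0:ℝ)..t, (rm (φ s z) - rp (φ s z)))
      (fun _ => 0) atTop ∧
    (∀ L : ℝ,
      Tendsto (fun t : ℝ => ⨆ z : M, (1/t) * ∫ s in (0:ℝ)..t, rm (φ s z)) atTop (𝓝 L) ↔
      Tendsto (fun t : ℝ => ⨆ z : M, (1/t) * ∫ s in (0:ℝ)..t, rp (φ s z)) atTop (𝓝 L)) ∧
    (∀ L : ℝ,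
      Tendsto (fun t : ℝ => ⨅ z : M, (1/t) * ∫ s in (0:ℝ)..t, rm (φ s z)) atTop (𝓝 L) ↔
      Tendsto (fun t : ℝ => ⨅ z : M, (1/t) * ∫ s in (0:ℝ)..t, rp (φ s z)) atTop (𝓝 L)) :=
  stmt_16_general φ hφsmooth Up Um rp rm hrp hrm hconjp hconjm β hβinv hgcont hg
end
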